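/- arXiv:1502.07045 — 2 statements merged into one kernel-verified Lean document; each statement's English description precedes it below -/
import Mathlib

section
/- Every tree-child binary phylogenetic network is tree-based. -/
/-! Directed multigraphs, walks, and binary phylogenetic networks
(following Francis & Steel, "Which phylogenetic networks are merely
trees with additional arcs?"). -/

universe u1 u2 u3 u4 u5 u6 u7

/-- In-degree of `v`: the number of arcs with target `v`. -/
noncomputable def InDeg {V : Type u2} {A : Type u3} (t : A → V) (v : V) : ℕ := {a : A | t a = v}.ncard

/-- Out-degree of `v`: the number of arcs with source `v`. -/
noncomputable def OutDeg {V : Type u2} {A : Type u3} (s : A → V) (v : V) : ℕ := {a : A | s a = v}.ncard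

/-- In-degree of `v` in the sub-digraph with arc set `A₀`. -/
noncomputable def InDegIn {V : Type u2} {A : Type u3} (t : A → V) (A₀ : Set A) (v : V) : ℕ :=
  {a : A | a ∈ A₀ ∧ t a = v}.ncard

/-- Out-degree of `v` in the sub-digraph with arc set `A₀`. -/
noncomputable def OutDegIn {V : Type u2} {A : Type u3} (s : A → V) (A₀ : Set A) (v : V) : ℕ :=
  {a : A | a ∈ A₀ ∧ s a = v}.ncard

/-- `ArcWalk s t u p v` : the list of arcs `p` is a directed walk from `u` to `v`
(consecutive arcs are compatible). -/
inductive ArcWalk {V : Type u2} {A : Type u3} (s t : A → V) : V → List A → V → Prop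
  | nil (v : V) : ArcWalk s t v [] v
  | cons {u w : V} {a : A} {p : List A} :
      s a = u → ArcWalk s t (t a) p w → ArcWalk s t u (a :: p) w

/-- The digraph `(V, S)` is a rooted directed tree with root `r`: every vertex of `V`
is reachable from `r` by a unique directed path using only arcs in `S`. -/
def IsRootedTree {V : Type u2} {A : Type u3} (s t : A → V) (S : Set A) (r : V) : Prop :=
  ∀ v : V, ∃! p : List A, (∀ a ∈ p, a ∈ S) ∧ ArcWalk s t r p v

/-- `(V₀, A₀)` is a rooted directed tree with root `r` (as a sub-digraph of the
ambient digraph given by `s`, `t`). -/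
def IsRootedTreeOn {V : Type u2} {A : Type u3} (s t : A → V) (V₀ : Set V) (A₀ : Set A)
    (r : V) : Prop :=
  r ∈ V₀ ∧ (∀ a ∈ A₀, s a ∈ V₀ ∧ t a ∈ V₀) ∧
    ∀ v ∈ V₀, ∃! p : List A, (∀ a ∈ p, a ∈ A₀) ∧ ArcWalk s t r p v

/-- A set of arcs is independent if no two distinct arcs of it share a vertex
(the vertices of an arc `a` being `s a` and `t a`). -/
def IndepArcs {V : Type u2} {A : Type u3} (s t : A → V) (I : Set A) : Prop :=
  ∀ a ∈ I, ∀ b ∈ I, a ≠ b → s a ≠ s b ∧ s a ≠ t b ∧ t a ≠ s b ∧ t a ≠ t b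

/-- A binary phylogenetic network over the (finite) leaf set `X`: a finite acyclic
directed multigraph whose out-degree-0 vertices are exactly the (images of the)
elements of `X`, each leaf has in-degree 1, there is a unique in-degree-0 vertex
(the root) of out-degree 1 or 2, and every other vertex has in-degree 2 and
out-degree 1, or in-degree 1 and out-degree 2. -/
structure PhyloNetwork (X : Type u1) (V : Type u2) (A : Type u3) where
  src : A → V
  tgt : A → V
  leafEmb : X → V
  root : V
  finV : Finite V
  finA : Finite A
  leafEmb_inj : Function.Injective leafEmb
  acyclic : ∀ (v : V) (p : List A), p ≠ [] → ¬ ArcWalk src tgt v p v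
  leaf_iff : ∀ v : V, (∃ x : X, leafEmb x = v) ↔ OutDeg src v = 0
  leaf_indeg : ∀ x : X, InDeg tgt (leafEmb x) = 1
  root_indeg : InDeg tgt root = 0
  root_unique : ∀ v : V, InDeg tgt v = 0 → v = root
  root_outdeg : OutDeg src root = 1 ∨ OutDeg src root = 2
  deg_other : ∀ v : V, v ≠ root → (¬ ∃ x : X, leafEmb x = v) →
    (InDeg tgt v = 2 ∧ OutDeg src v = 1) ∨ (InDeg tgt v = 1 ∧ OutDeg src v = 2)

namespace PhyloNetwork

variable {X : Type u1} {V : Type u2} {A : Type u3}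

/-- The set of leaves of the network (the copy of `X` inside `V`). -/
def leaves (N : PhyloNetwork X V A) : Set V := Set.range N.leafEmb

/-- `S ⊆ A` is a support tree for `N`: the digraph `(V, S)` is a rooted directed
tree with root `N.root` whose out-degree-0 vertices are exactly the leaves. -/
def IsSupportTree (N : PhyloNetwork X V A) (S : Set A) : Prop :=
  IsRootedTree N.src N.tgt S N.root ∧
    ∀ v : V, OutDegIn N.src S v = 0 ↔ v ∈ N.leaves

/-- `N` is tree-based if it has a support tree. -/
def TreeBased (N : PhyloNetwork X V A) : Prop := ∃ S : Set A, N.IsSupportTree S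

/-- `S₁`: the arcs whose source has out-degree 1 or whose target has in-degree 1. -/
def S1 (N : PhyloNetwork X V A) : Set A :=
  {a : A | OutDeg N.src (N.src a) = 1 ∨ InDeg N.tgt (N.tgt a) = 1}

/-- `S` is admissible: it contains `S₁`, every in-degree-2 vertex has exactly one
incoming arc in `S` (C₁), and every out-degree-2 vertex has at least one outgoing
arc in `S` (C₂). -/
def Admissible (N : PhyloNetwork X V A) (S : Set A) : Prop :=
  N.S1 ⊆ S ∧
    (∀ v : V, InDeg N.tgt v = 2 → ∃! a : A, a ∈ S ∧ N.tgt a = v) ∧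
    (∀ v : V, OutDeg N.src v = 2 → ∃ a ∈ S, N.src a = v)

/-- An antichain: no directed path from one element to another distinct element. -/
def IsAntichainIn (N : PhyloNetwork X V A) (𝒜 : Set V) : Prop :=
  ∀ u ∈ 𝒜, ∀ v ∈ 𝒜, u ≠ v → ∀ p : List A, ¬ ArcWalk N.src N.tgt u p v

/-- The antichain-to-leaf property: from every antichain of non-leaf vertices there
is a family of pairwise arc-disjoint directed paths to leaves. -/
def AntichainToLeaf (N : PhyloNetwork X V A) : Prop :=
  ∀ 𝒜 : Set V, (∀ v ∈ 𝒜, v ∉ N.leaves) → N.IsAntichainIn 𝒜 →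
    ∃ p : V → List A,
      (∀ v ∈ 𝒜, ∃ w ∈ N.leaves, ArcWalk N.src N.tgt v (p v) w) ∧
      (∀ u ∈ 𝒜, ∀ v ∈ 𝒜, u ≠ v → ∀ a ∈ p u, a ∉ p v)

end PhyloNetwork

/-- The sub-digraph `(V₀, A₀)` of the digraph given by `s, t` is a subdivision of the
digraph given by `s', t'`, realized by the vertex map `φV`: the vertices of the target
digraph correspond exactly to the vertices of `(V₀, A₀)` that do not have in-degree 1
and out-degree 1, and each target arc corresponds to a directed path of `(V₀, A₀)`
with all internal vertices suppressed, these paths partitioning `A₀`. Equivalently,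
the target digraph is obtained from `(V₀, A₀)` by repeatedly suppressing all vertices
of in-degree 1 and out-degree 1. -/
def SubdivOn {V : Type u2} {A : Type u3} {V' : Type u4} {A' : Type u5}
    (s t : A → V) (V₀ : Set V) (A₀ : Set A) (s' t' : A' → V') (φV : V' → V) : Prop :=
  Function.Injective φV ∧
  (∀ v' : V', φV v' ∈ V₀) ∧
  (∀ a ∈ A₀, s a ∈ V₀ ∧ t a ∈ V₀) ∧
  (∀ v ∈ V₀, v ∈ Set.range φV ↔ ¬ (InDegIn t A₀ v = 1 ∧ OutDegIn s A₀ v = 1)) ∧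
  ∃ φA : A' → List A,
    (∀ e : A', φA e ≠ [] ∧ (φA e).Nodup ∧ (∀ a ∈ φA e, a ∈ A₀) ∧
      ArcWalk s t (φV (s' e)) (φA e) (φV (t' e)) ∧
      ∀ a ∈ (φA e).dropLast, t a ∉ Set.range φV) ∧
    (∀ a ∈ A₀, ∃! e : A', a ∈ φA e)

/-- A rooted binary phylogenetic `X`-tree: a binary phylogenetic network over `X`
with no vertices of in-degree 2. -/
def IsPhyloTree {X : Type u1} {V : Type u2} {A : Type u3}
    (T : PhyloNetwork X V A) : Prop :=
  ∀ v : V, InDeg T.tgt v ≠ 2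

/-- `N` is based on the tree `T`: `N` has a support tree `S` such that `(V, S)` is a
subdivision of `T`, matching roots and leaf labels. -/
def BasedOn {X : Type u1} {V : Type u2} {A : Type u3} {V' : Type u4} {A' : Type u5}
    (N : PhyloNetwork X V A) (T : PhyloNetwork X V' A') : Prop :=
  ∃ (S : Set A) (φV : V' → V),
    N.IsSupportTree S ∧
    SubdivOn N.src N.tgt Set.univ S T.src T.tgt φV ∧
    φV T.root = N.root ∧
    ∀ x : X, φV (T.leafEmb x) = N.leafEmb x

/-- `N` displays the tree `T`: there are `V₀ ⊆ V` and `A₀ ⊆ A` forming a rooted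
directed tree whose out-degree-0 vertices are exactly the leaves of `N`, such that
`T` is obtained from `(V₀, A₀)` by repeatedly suppressing vertices of in-degree 1 and
out-degree 1 and deleting the root together with its outgoing arc so long as the root
has out-degree 1 (the deleted root chain is the path `p₀`). -/
def Displays {X : Type u1} {V : Type u2} {A : Type u3} {V' : Type u4} {A' : Type u5}
    (N : PhyloNetwork X V A) (T : PhyloNetwork X V' A') : Prop :=
  ∃ (V₀ : Set V) (A₀ : Set A) (r₀ : V) (φV : V' → V) (p₀ : List A) (φA : A' → List A),
    IsRootedTreeOn N.src N.tgt V₀ A₀ r₀ ∧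
    (∀ v ∈ V₀, OutDegIn N.src A₀ v = 0 ↔ v ∈ N.leaves) ∧
    Function.Injective φV ∧
    (∀ v' : V', φV v' ∈ V₀) ∧
    (∀ x : X, φV (T.leafEmb x) = N.leafEmb x) ∧
    p₀.Nodup ∧ (∀ a ∈ p₀, a ∈ A₀) ∧
    ArcWalk N.src N.tgt r₀ p₀ (φV T.root) ∧
    (∀ a ∈ p₀, OutDegIn N.src A₀ (N.src a) = 1 ∧ N.src a ∉ Set.range φV) ∧
    (∀ e : A', φA e ≠ [] ∧ (φA e).Nodup ∧ (∀ a ∈ φA e, a ∈ A₀) ∧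
      ArcWalk N.src N.tgt (φV (T.src e)) (φA e) (φV (T.tgt e)) ∧
      ∀ a ∈ (φA e).dropLast, N.tgt a ∉ Set.range φV) ∧
    (∀ a ∈ A₀, (a ∈ p₀ ∧ ∀ e : A', a ∉ φA e) ∨ (a ∉ p₀ ∧ ∃! e : A', a ∈ φA e))

/-- The vertices of `N` having a directed path (possibly trivial) to a vertex in `L`. -/
def KeepV {X : Type u1} {V : Type u2} {A : Type u3}
    (N : PhyloNetwork X V A) (L : Set V) : Set V :=
  {v : V | ∃ (p : List A) (w : V), w ∈ L ∧ ArcWalk N.src N.tgt v p w}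

/-- The arcs of `N` lying on a directed path ending at a vertex in `L`. -/
def KeepA {X : Type u1} {V : Type u2} {A : Type u3}
    (N : PhyloNetwork X V A) (L : Set V) : Set A :=
  {a : A | ∃ (p : List A) (w : V), w ∈ L ∧ ArcWalk N.src N.tgt (N.tgt a) p w}


section Aux

variable {V : Type u2} {A : Type u3} {s t : A → V}

private lemma arcwalk_nil_eq {u v : V} (h : ArcWalk s t u [] v) : u = v := by
  cases h; rfl

private lemma arcwalk_append {u v : V} {p : List A}
    (h1 : ArcWalk s t u p v) :
    ∀ {w : V} {q : List A}, ArcWalk s t v q w → ArcWalk s t u (p ++ q) w := by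
  induction h1 with
  | nil => intro w q h2; exact h2
  | cons hs _ ih => intro w q h2; exact ArcWalk.cons hs (ih h2)

private lemma arcwalk_concat {u v : V} {p : List A} (h : ArcWalk s t u p v) :
    (p = [] ∧ u = v) ∨ ∃ q a, p = q ++ [a] ∧ ArcWalk s t u q (s a) ∧ t a = v := by
  induction h with
  | nil v => exact Or.inl ⟨rfl, rfl⟩
  | @cons u w a p hs hw ih =>
    right
    rcases ih with ⟨hp, he⟩ | ⟨q, b, hpe, hq, hb⟩
    · subst hp hs
      exact ⟨[], a, rfl, ArcWalk.nil _, he⟩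
    · exact ⟨a :: q, b, by rw [hpe]; rfl, ArcWalk.cons hs hq, hb⟩

end Aux

/-- Every tree-child binary phylogenetic network is tree-based:
if every non-leaf vertex has at least one child of in-degree 1, then `N` is
tree-based. -/
theorem statement_11 {X : Type u1} {V : Type u2} {A : Type u3} (N : PhyloNetwork X V A)
    (h : ∀ v : V, v ∉ N.leaves → ∃ a : A, N.src a = v ∧ InDeg N.tgt (N.tgt a) = 1) :
    N.TreeBased := by
  classical
  have finA : Finite A := N.finA
  have finV : Finite V := N.finV
  -- A is nonempty (the root has out-degree ≥ 1)
  obtain ⟨a₀, -⟩ : ∃ a : A, N.src a = N.root := by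
    have h1 : OutDeg N.src N.root ≠ 0 := by rcases N.root_outdeg with h'|h' <;> omega
    exact Set.nonempty_of_ncard_ne_zero h1
  -- choice of one incoming arc for each vertex that has one
  set ch : V → A := fun v => if hv : ∃ a, N.tgt a = v then hv.choose else a₀ with hch
  have ch_tgt : ∀ v : V, (∃ a, N.tgt a = v) → N.tgt (ch v) = v := by
    intro v hv
    simp only [hch, dif_pos hv]
    exact hv.choose_spec
  set S : Set A := {a | ch (N.tgt a) = a} with hSdef
  have hchS : ∀ v : V, (∃ a, N.tgt a = v) → ch v ∈ S ∧ N.tgt (ch v) = v := by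
    intro v hv
    have h1 := ch_tgt v hv
    constructor
    · show ch (N.tgt (ch v)) = ch v
      rw [h1]
    · exact h1
  have indeg1_mem : ∀ a : A, InDeg N.tgt (N.tgt a) = 1 → a ∈ S := by
    intro a ha
    obtain ⟨b, hb⟩ := Set.ncard_eq_one.mp ha
    have h1 : a ∈ ({x : A | N.tgt x = N.tgt a}) := rfl
    have h2 : ch (N.tgt a) ∈ ({x : A | N.tgt x = N.tgt a}) := ch_tgt _ ⟨a, rfl⟩
    rw [hb] at h1 h2
    have h1' : a = b := h1
    have h2' : ch (N.tgt a) = b := h2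
    show ch (N.tgt a) = a
    rw [h2', h1']
  have uniq_in : ∀ a b : A, a ∈ S → b ∈ S → N.tgt a = N.tgt b → a = b := by
    intro a b ha hb hab
    have h1 : ch (N.tgt a) = a := ha
    have h2 : ch (N.tgt b) = b := hb
    rw [← h1, ← h2, hab]
  have exists_in : ∀ v : V, v ≠ N.root → ∃ a ∈ S, N.tgt a = v := by
    intro v hv
    have h1 : InDeg N.tgt v ≠ 0 := fun h0 => hv (N.root_unique v h0)
    obtain ⟨a, ha⟩ := Set.nonempty_of_ncard_ne_zero h1
    obtain ⟨h2, h3⟩ := hchS v ⟨a, ha⟩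
    exact ⟨ch v, h2, h3⟩
  -- well-foundedness of the arc relation
  set r : V → V → Prop := fun u v => ∃ a, N.src a = u ∧ N.tgt a = v with hr
  have walk_tg : ∀ u v : V, Relation.TransGen r u v →
      ∃ p : List A, p ≠ [] ∧ ArcWalk N.src N.tgt u p v := by
    intro u v htg
    induction htg with
    | single hb =>
      obtain ⟨a, ha1, ha2⟩ := hb
      refine ⟨[a], by simp, ?_⟩
      subst ha1 ha2
      exact ArcWalk.cons rfl (ArcWalk.nil _)
    | tail _ hb ih =>
      obtain ⟨a, ha1, ha2⟩ := hb
      obtain ⟨p, hp1, hp2⟩ := ih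
      refine ⟨p ++ [a], by simp, ?_⟩
      refine arcwalk_append hp2 ?_
      subst ha1 ha2
      exact ArcWalk.cons rfl (ArcWalk.nil _)
  have hwf : WellFounded r := by
    have htg : WellFounded (Relation.TransGen r) := by
      haveI : IsTrans V (Relation.TransGen r) := ⟨fun _ _ _ => Relation.TransGen.trans⟩
      haveI : IsIrrefl V (Relation.TransGen r) := ⟨by
        intro v hv
        obtain ⟨p, hp1, hp2⟩ := walk_tg v v hv
        exact N.acyclic v p hp1 hp2⟩
      exact Finite.wellFounded_of_trans_of_irrefl _
    exact Subrelation.wf (fun hab => Relation.TransGen.single hab) htg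
  -- existence of a path from the root in S
  have reach : ∀ v : V, ∃ p : List A, (∀ a ∈ p, a ∈ S) ∧ ArcWalk N.src N.tgt N.root p v := by
    intro v
    induction v using hwf.induction with
    | _ v ih =>
      by_cases hv : v = N.root
      · subst hv
        exact ⟨[], by simp, ArcWalk.nil _⟩
      · obtain ⟨a, haS, hat⟩ := exists_in v hv
        obtain ⟨p, hpS, hpw⟩ := ih (N.src a) ⟨a, rfl, hat⟩
        refine ⟨p ++ [a], ?_, ?_⟩
        · intro b hb
          rcases List.mem_append.mp hb with hb | hb
          · exact hpS b hb
          · rw [List.mem_singleton.mp hb]; exact haS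
        · refine arcwalk_append hpw ?_
          subst hat
          exact ArcWalk.cons rfl (ArcWalk.nil _)
  -- uniqueness of paths from the root in S
  have uniq : ∀ n : ℕ, ∀ v : V, ∀ p q : List A, p.length ≤ n →
      (∀ a ∈ p, a ∈ S) → ArcWalk N.src N.tgt N.root p v →
      (∀ a ∈ q, a ∈ S) → ArcWalk N.src N.tgt N.root q v → p = q := by
    intro n
    induction n with
    | zero =>
      intro v p q hl hpS hpw hqS hqw
      have hp : p = [] := List.length_eq_zero_iff.mp (Nat.le_zero.mp hl)
      subst hp
      have hv := arcwalk_nil_eq hpw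
      subst hv
      by_contra hq0
      have hq : q ≠ [] := fun h' => hq0 (h' ▸ rfl)
      exact N.acyclic N.root q hq hqw
    | succ n ih =>
      intro v p q hl hpS hpw hqS hqw
      by_cases hv : v = N.root
      · subst hv
        have hp : p = [] := by
          by_contra h'
          exact N.acyclic _ p h' hpw
        have hq : q = [] := by
          by_contra h'
          exact N.acyclic _ q h' hqw
        rw [hp, hq]
      · rcases arcwalk_concat hpw with ⟨hp, he⟩ | ⟨p', a, hpe, hp', ha⟩
        · exact absurd he.symm hv
        rcases arcwalk_concat hqw with ⟨hq, he⟩ | ⟨q', b, hqe, hq', hb⟩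
        · exact absurd he.symm hv
        have haS : a ∈ S := hpS a (by rw [hpe]; simp)
        have hbS : b ∈ S := hqS b (by rw [hqe]; simp)
        have hab : a = b := uniq_in a b haS hbS (by rw [ha, hb])
        subst hab
        have hlen : p'.length ≤ n := by
          have : p.length = p'.length + 1 := by rw [hpe]; simp
          omega
        have heq : p' = q' := ih (N.src a) p' q' hlen
          (fun x hx => hpS x (by rw [hpe]; exact List.mem_append_left _ hx)) hp'
          (fun x hx => hqS x (by rw [hqe]; exact List.mem_append_left _ hx)) hq'
        rw [hpe, hqe, heq]
  refine ⟨S, ?_, ?_⟩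
  · intro v
    obtain ⟨p, hpS, hpw⟩ := reach v
    refine ⟨p, ⟨hpS, hpw⟩, ?_⟩
    rintro q ⟨hqS, hqw⟩
    exact uniq q.length v q p le_rfl hqS hqw hpS hpw
  · intro v
    constructor
    · intro h0
      by_contra hv
      obtain ⟨a, ha1, ha2⟩ := h v hv
      have haS : a ∈ S := indeg1_mem a ha2
      have hne : ({x : A | x ∈ S ∧ N.src x = v}).Nonempty := ⟨a, haS, ha1⟩
      have := (Set.ncard_pos (Set.toFinite _)).mpr hne
      rw [OutDegIn] at h0
      omega
    · intro hv
      have h0 : OutDeg N.src v = 0 := by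
        obtain ⟨x, hx⟩ := hv
        exact (N.leaf_iff v).mp ⟨x, hx⟩
      have hemp : ({a : A | N.src a = v}) = ∅ :=
        (Set.ncard_eq_zero (Set.toFinite _)).mp h0
      rw [OutDegIn]
      have : ({a : A | a ∈ S ∧ N.src a = v}) = ∅ := by
        ext x
        simp only [Set.mem_setOf_eq, Set.mem_empty_iff_false, iff_false]
        rintro ⟨-, hx⟩
        exact absurd (show x ∈ ({a : A | N.src a = v}) from hx) (by rw [hemp]; simp)
      rw [this, Set.ncard_empty]
end

section
/- Being based on a tree is strictly stronger than displaying it: there exist a binary phylogenetic network N over a 3-element leaf set X and rooted binary phylogenetic X-trees T and T′ such that N is based on T, N displays T′, but N is not based on T′. -/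
/-! Directed multigraphs, walks, and binary phylogenetic networks
(following Francis & Steel, "Which phylogenetic networks are merely
trees with additional arcs?"). -/

universe u1 u2 u3 u4 u5 u6 u7

section AuxLemmas

variable {V : Type} {A : Type}

lemma my_ncard_eq {α : Type} [Fintype α] (P : α → Prop) [DecidablePred P] :
    Set.ncard {a | P a} = (Finset.univ.filter P).card := by
  rw [Set.ncard_eq_toFinset_card']
  congr 1
  ext a
  simp

lemma my_InDeg_eq [Fintype A] [DecidableEq V] (t : A → V) (v : V) :
    InDeg t v = (Finset.univ.filter (fun a => t a = v)).card := my_ncard_eq _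

lemma my_OutDeg_eq [Fintype A] [DecidableEq V] (s : A → V) (v : V) :
    OutDeg s v = (Finset.univ.filter (fun a => s a = v)).card := my_ncard_eq _

lemma my_InDegIn_eq [Fintype A] [DecidableEq V] (t : A → V) (A₀ : Set A)
    [DecidablePred (· ∈ A₀)] (v : V) :
    InDegIn t A₀ v = (Finset.univ.filter (fun a => a ∈ A₀ ∧ t a = v)).card := my_ncard_eq _

lemma my_OutDegIn_eq [Fintype A] [DecidableEq V] (s : A → V) (A₀ : Set A)
    [DecidablePred (· ∈ A₀)] (v : V) :
    OutDegIn s A₀ v = (Finset.univ.filter (fun a => a ∈ A₀ ∧ s a = v)).card := my_ncard_eq _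

lemma arcwalk_nil {s t : A → V} {u v : V} (h : ArcWalk s t u [] v) : u = v := by
  cases h; rfl

lemma arcwalk_snoc {s t : A → V} {u v : V} {p : List A} {a : A} :
    ArcWalk s t u (p ++ [a]) v ↔ ArcWalk s t u p (s a) ∧ t a = v := by
  induction p generalizing u with
  | nil =>
    simp only [List.nil_append]
    constructor
    · intro h
      cases h with
      | cons h1 h2 => exact ⟨h1 ▸ ArcWalk.nil _, arcwalk_nil h2⟩
    · rintro ⟨h1, h2⟩
      have := arcwalk_nil h1
      exact ArcWalk.cons this.symm (h2 ▸ ArcWalk.nil _)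
  | cons b q ih =>
    constructor
    · intro h
      cases h with
      | cons h1 h2 =>
        obtain ⟨w1, w2⟩ := ih.mp h2
        exact ⟨ArcWalk.cons h1 w1, w2⟩
    · rintro ⟨h1, h2⟩
      cases h1 with
      | cons h3 h4 => exact ArcWalk.cons h3 (ih.mpr ⟨h4, h2⟩)

lemma arcwalk_rank {s t : A → V} {rank : V → ℕ} (hr : ∀ a, rank (s a) < rank (t a)) :
    ∀ {u v : V} {p : List A}, ArcWalk s t u p v → rank u ≤ rank v := by
  intro u v p h
  induction h with
  | nil => exact le_refl _
  | cons h1 _ ih => exact le_trans (h1 ▸ (hr _).le) ih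

lemma arcwalk_rank_lt {s t : A → V} {rank : V → ℕ} (hr : ∀ a, rank (s a) < rank (t a))
    {u v : V} {p : List A} (hp : p ≠ []) (h : ArcWalk s t u p v) : rank u < rank v := by
  cases h with
  | nil => exact absurd rfl hp
  | cons h1 h2 => exact lt_of_lt_of_le (h1 ▸ hr _) (arcwalk_rank hr h2)

lemma my_acyclic {s t : A → V} {rank : V → ℕ} (hr : ∀ a, rank (s a) < rank (t a)) :
    ∀ (v : V) (p : List A), p ≠ [] → ¬ ArcWalk s t v p v := by
  intro v p hp h
  exact lt_irrefl _ (arcwalk_rank_lt hr hp h)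

/-- uniqueness of walks from the root when in-arcs in `S` are unique per target
and never enter the root. -/
lemma walk_unique_aux {s t : A → V} {S : Set A} {r : V}
    (hinj : ∀ a ∈ S, ∀ b ∈ S, t a = t b → a = b)
    (hr : ∀ a ∈ S, t a ≠ r) :
    ∀ (n : ℕ) (p q : List A) (v : V), p.length ≤ n →
      (∀ a ∈ p, a ∈ S) → (∀ a ∈ q, a ∈ S) →
      ArcWalk s t r p v → ArcWalk s t r q v → p = q := by
  intro n
  induction n with
  | zero =>
    intro p q v hlen hp hq wp wq
    have hpnil : p = [] := List.length_eq_zero_iff.mp (Nat.le_zero.mp hlen)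
    subst hpnil
    have hv : r = v := arcwalk_nil wp
    rcases q.eq_nil_or_concat with h | ⟨Q, b, hQ⟩
    · exact h.symm
    · rw [List.concat_eq_append] at hQ
      subst hQ
      obtain ⟨_, hb⟩ := arcwalk_snoc.mp wq
      exact absurd (hb.trans hv.symm) (hr b (hq b (by simp)))
  | succ n ih =>
    intro p q v hlen hp hq wp wq
    rcases p.eq_nil_or_concat with h | ⟨P, a, hP⟩
    · subst h
      have hv : r = v := arcwalk_nil wp
      rcases q.eq_nil_or_concat with h | ⟨Q, b, hQ⟩
      · exact h.symm
      · rw [List.concat_eq_append] at hQ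
        subst hQ
        obtain ⟨_, hb⟩ := arcwalk_snoc.mp wq
        exact absurd (hb.trans hv.symm) (hr b (hq b (by simp)))
    · rw [List.concat_eq_append] at hP
      subst hP
      obtain ⟨wpa, ha⟩ := arcwalk_snoc.mp wp
      rcases q.eq_nil_or_concat with h | ⟨Q, b, hQ⟩
      · subst h
        have hv : r = v := arcwalk_nil wq
        exact absurd (ha.trans hv.symm) (hr a (hp a (by simp)))
      · rw [List.concat_eq_append] at hQ
        subst hQ
        obtain ⟨wqb, hb⟩ := arcwalk_snoc.mp wq
        have hab : a = b := hinj a (hp a (by simp)) b (hq b (by simp)) (ha.trans hb.symm)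
        subst hab
        have hlen' : P.length ≤ n := by
          simp only [List.length_append, List.length_cons, List.length_nil] at hlen
          omega
        have hPQ : P = Q := ih P Q (s a) hlen' (fun x hx => hp x (by simp [hx]))
            (fun x hx => hq x (by simp [hx])) wpa wqb
        rw [hPQ]

end AuxLemmas
section AuxLemmas2

variable {V : Type} {A : Type}

lemma walk_unique {s t : A → V} {S : Set A} {r : V}
    (hinj : ∀ a ∈ S, ∀ b ∈ S, t a = t b → a = b)
    (hr : ∀ a ∈ S, t a ≠ r) {p q : List A} {v : V}
    (hp : ∀ a ∈ p, a ∈ S) (hq : ∀ a ∈ q, a ∈ S)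
    (wp : ArcWalk s t r p v) (wq : ArcWalk s t r q v) : p = q :=
  walk_unique_aux hinj hr p.length p q v (le_refl _) hp hq wp wq

lemma in_arc_exists {s t : A → V} {S : Set A} {r : V}
    (htree : IsRootedTree s t S r) {v : V} (hv : v ≠ r) :
    ∃ a ∈ S, t a = v := by
  obtain ⟨p, ⟨hp, wp⟩, -⟩ := htree v
  rcases p.eq_nil_or_concat with h | ⟨P, a, hP⟩
  · subst h; exact absurd (arcwalk_nil wp).symm hv
  · rw [List.concat_eq_append] at hP
    subst hP
    obtain ⟨-, ha⟩ := arcwalk_snoc.mp wp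
    exact ⟨a, hp a (by simp), ha⟩

lemma in_arc_unique {s t : A → V} {S : Set A} {r : V}
    (htree : IsRootedTree s t S r) {a b : A}
    (ha : a ∈ S) (hb : b ∈ S) (hab : t a = t b) : a = b := by
  obtain ⟨pa, ⟨hpa, wpa⟩, -⟩ := htree (s a)
  obtain ⟨pb, ⟨hpb, wpb⟩, -⟩ := htree (s b)
  obtain ⟨p0, -, hp0⟩ := htree (t a)
  have wa : ArcWalk s t r (pa ++ [a]) (t a) := arcwalk_snoc.mpr ⟨wpa, rfl⟩
  have wb : ArcWalk s t r (pb ++ [b]) (t a) := arcwalk_snoc.mpr ⟨wpb, hab.symm⟩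
  have ma : ∀ x ∈ pa ++ [a], x ∈ S := by
    intro x hx
    rcases List.mem_append.mp hx with h | h
    · exact hpa x h
    · rw [List.mem_singleton.mp h]; exact ha
  have mb : ∀ x ∈ pb ++ [b], x ∈ S := by
    intro x hx
    rcases List.mem_append.mp hx with h | h
    · exact hpb x h
    · rw [List.mem_singleton.mp h]; exact hb
  have e1 := hp0 (pa ++ [a]) ⟨ma, wa⟩
  have e2 := hp0 (pb ++ [b]) ⟨mb, wb⟩
  have : pa ++ [a] = pb ++ [b] := e1.trans e2.symm
  have := congrArg List.getLast? this
  simpa using this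

lemma arcwalk_ancestors {s t : A → V} {S : Set A} (anc : V → V → Prop)
    (h2 : ∀ a ∈ S, ∀ v, anc v (t a) → anc v (s a)) :
    ∀ {u v : V} {p : List A}, (∀ a ∈ p, a ∈ S) → ArcWalk s t u p v →
      anc v v → anc v u := by
  intro u v p hp w
  induction w with
  | nil => exact fun h => h
  | cons h1 _ ih =>
    intro hv
    rename_i a q _
    exact h1 ▸ h2 a (hp a (by simp)) _ (ih (fun x hx => hp x (by simp [hx])) hv)
end AuxLemmas2
namespace St16

/-! Concrete network `N` on 9 vertices, 10 arcs, leaves x=6, y=7, z=8.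
Vertices: 0=ρ, 1=p', 2=q, 3=p, 4=h, 5=h', 6=x, 7=y, 8=z.
Arcs: 0: ρ→p', 1: ρ→q, 2: p'→z, 3: p'→p, 4: p→h, 5: p→h',
6: q→h, 7: q→h', 8: h→x, 9: h'→y. -/

def nsrc : Fin 10 → Fin 9 := ![0, 0, 1, 1, 3, 3, 2, 2, 4, 5]
def ntgt : Fin 10 → Fin 9 := ![1, 2, 8, 3, 4, 5, 4, 5, 6, 7]
def nleaf : Fin 3 → Fin 9 := ![6, 7, 8]
def nrank : Fin 9 → ℕ := ![0, 1, 1, 2, 3, 3, 4, 4, 4]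

lemma nrank_lt : ∀ a : Fin 10, nrank (nsrc a) < nrank (ntgt a) := by decide

noncomputable def N : PhyloNetwork (Fin 3) (Fin 9) (Fin 10) where
  src := nsrc
  tgt := ntgt
  leafEmb := nleaf
  root := 0
  finV := inferInstance
  finA := inferInstance
  leafEmb_inj := by decide
  acyclic := my_acyclic nrank_lt
  leaf_iff := by
    intro v
    rw [my_OutDeg_eq]
    revert v
    decide
  leaf_indeg := by
    intro x
    rw [my_InDeg_eq]
    revert x
    decide
  root_indeg := by rw [my_InDeg_eq]; decide
  root_unique := by
    intro v
    rw [my_InDeg_eq]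
    revert v
    decide
  root_outdeg := by rw [my_OutDeg_eq]; decide
  deg_other := by
    intro v h1 h2
    rw [my_InDeg_eq, my_OutDeg_eq]
    revert h1 h2
    revert v
    decide

/-! Tree `T` = ((z,x),y). Vertices: 0=r, 1=c, 2=x, 3=y, 4=z.
Arcs: 0: r→c, 1: r→y, 2: c→z, 3: c→x. -/
def tsrc : Fin 4 → Fin 5 := ![0, 0, 1, 1]
def ttgt : Fin 4 → Fin 5 := ![1, 3, 4, 2]
def trank : Fin 5 → ℕ := ![0, 1, 2, 2, 2]

noncomputable def T : PhyloNetwork (Fin 3) (Fin 5) (Fin 4) where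
  src := tsrc
  tgt := ttgt
  leafEmb := ![2, 3, 4]
  root := 0
  finV := inferInstance
  finA := inferInstance
  leafEmb_inj := by decide
  acyclic := my_acyclic (rank := trank) (by decide)
  leaf_iff := by intro v; rw [my_OutDeg_eq]; revert v; decide
  leaf_indeg := by intro x; rw [my_InDeg_eq]; revert x; decide
  root_indeg := by rw [my_InDeg_eq]; decide
  root_unique := by intro v; rw [my_InDeg_eq]; revert v; decide
  root_outdeg := by rw [my_OutDeg_eq]; decide
  deg_other := by
    intro v h1 h2
    rw [my_InDeg_eq, my_OutDeg_eq]
    revert h1 h2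
    revert v
    decide

/-! Tree `T'` = (z,(x,y)). Vertices: 0=r', 1=c', 2=x, 3=y, 4=z.
Arcs: 0: r'→z, 1: r'→c', 2: c'→x, 3: c'→y. -/
def t'src : Fin 4 → Fin 5 := ![0, 0, 1, 1]
def t'tgt : Fin 4 → Fin 5 := ![4, 1, 2, 3]

noncomputable def T' : PhyloNetwork (Fin 3) (Fin 5) (Fin 4) where
  src := t'src
  tgt := t'tgt
  leafEmb := ![2, 3, 4]
  root := 0
  finV := inferInstance
  finA := inferInstance
  leafEmb_inj := by decide
  acyclic := my_acyclic (rank := trank) (by decide)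
  leaf_iff := by intro v; rw [my_OutDeg_eq]; revert v; decide
  leaf_indeg := by intro x; rw [my_InDeg_eq]; revert x; decide
  root_indeg := by rw [my_InDeg_eq]; decide
  root_unique := by intro v; rw [my_InDeg_eq]; revert v; decide
  root_outdeg := by rw [my_OutDeg_eq]; decide
  deg_other := by
    intro v h1 h2
    rw [my_InDeg_eq, my_OutDeg_eq]
    revert h1 h2
    revert v
    decide

end St16
namespace St16

/-- The support tree: all arcs except 5 (p→h') and 6 (q→h). -/
def SA : Set (Fin 10) := {a | a ∈ ([0, 1, 2, 3, 4, 7, 8, 9] : List (Fin 10))}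

instance : DecidablePred (· ∈ SA) := fun a =>
  decidable_of_iff (a ∈ ([0, 1, 2, 3, 4, 7, 8, 9] : List (Fin 10))) Iff.rfl

lemma SA_inj : ∀ a ∈ SA, ∀ b ∈ SA, ntgt a = ntgt b → a = b := by decide
lemma SA_root : ∀ a ∈ SA, ntgt a ≠ 0 := by decide

/-- canonical path from the root to each vertex inside SA -/
def pathA : Fin 9 → List (Fin 10) :=
  ![[], [0], [1], [0, 3], [0, 3, 4], [1, 7], [0, 3, 4, 8], [1, 7, 9], [0, 2]]

lemma pathA_walk : ∀ v : Fin 9, (∀ a ∈ pathA v, a ∈ SA) ∧ ArcWalk nsrc ntgt 0 (pathA v) v := by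
  intro v
  fin_cases v <;>
    refine ⟨by decide, ?_⟩ <;>
    repeat first
      | exact ArcWalk.nil _
      | refine ArcWalk.cons (by decide) ?_

lemma SA_tree : IsRootedTree nsrc ntgt SA 0 := by
  intro v
  exact ⟨pathA v, pathA_walk v, fun q hq =>
    walk_unique SA_inj SA_root hq.1 (pathA_walk v).1 hq.2 (pathA_walk v).2⟩

lemma SA_support : N.IsSupportTree SA := by
  constructor
  · exact SA_tree
  · intro v
    rw [my_OutDegIn_eq]
    show _ ↔ v ∈ Set.range nleaf
    simp only [Set.mem_range]
    revert v
    decide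

/-- vertex embedding of T into N -/
def phiT : Fin 5 → Fin 9 := ![0, 1, 6, 7, 8]
/-- arc paths of T inside SA -/
def phiAT : Fin 4 → List (Fin 10) := ![[0], [1, 7, 9], [2], [3, 4, 8]]

lemma basedOn_N_T : BasedOn N T := by
  refine ⟨SA, phiT, SA_support, ?_, by decide, by decide⟩
  refine ⟨by decide, fun v' => trivial, fun a _ => ⟨trivial, trivial⟩, ?_, phiAT, ?_, ?_⟩
  · intro v _
    rw [my_InDegIn_eq, my_OutDegIn_eq]
    simp only [Set.mem_range]
    revert v
    decide
  · intro e
    refine ⟨by revert e; decide, by revert e; decide, by revert e; decide, ?_, ?_⟩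
    · fin_cases e <;>
        repeat first
          | exact ArcWalk.nil _
          | refine ArcWalk.cons (by decide) ?_
    · simp only [Set.mem_range]
      revert e
      decide
  · intro a ha
    have ha' : a ∈ ([0, 1, 2, 3, 4, 7, 8, 9] : List (Fin 10)) := ha
    fin_cases a
    · exact ⟨0, by decide, by decide⟩
    · exact ⟨1, by decide, by decide⟩
    · exact ⟨2, by decide, by decide⟩
    · exact ⟨3, by decide, by decide⟩
    · exact ⟨3, by decide, by decide⟩
    · exact absurd ha' (by decide)
    · exact absurd ha' (by decide)
    · exact ⟨1, by decide, by decide⟩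
    · exact ⟨3, by decide, by decide⟩
    · exact ⟨1, by decide, by decide⟩

end St16
namespace St16

/-- displayed subtree: drop vertex q (=2) and arcs 1,6,7 -/
def DV : Set (Fin 9) := {v | v ∈ ([0, 1, 3, 4, 5, 6, 7, 8] : List (Fin 9))}
def DA : Set (Fin 10) := {a | a ∈ ([0, 2, 3, 4, 5, 8, 9] : List (Fin 10))}

instance : DecidablePred (· ∈ DV) := fun v =>
  decidable_of_iff (v ∈ ([0, 1, 3, 4, 5, 6, 7, 8] : List (Fin 9))) Iff.rfl
instance : DecidablePred (· ∈ DA) := fun a =>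
  decidable_of_iff (a ∈ ([0, 2, 3, 4, 5, 8, 9] : List (Fin 10))) Iff.rfl

lemma DA_inj : ∀ a ∈ DA, ∀ b ∈ DA, ntgt a = ntgt b → a = b := by decide
lemma DA_root : ∀ a ∈ DA, ntgt a ≠ 0 := by decide

def pathD : Fin 9 → List (Fin 10) :=
  ![[], [0], [], [0, 3], [0, 3, 4], [0, 3, 5], [0, 3, 4, 8], [0, 3, 5, 9], [0, 2]]

lemma pathD_walk : ∀ v ∈ DV, (∀ a ∈ pathD v, a ∈ DA) ∧ ArcWalk nsrc ntgt 0 (pathD v) v := by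
  intro v hv
  fin_cases v <;>
    first
      | exact absurd hv (by decide)
      | (refine ⟨by decide, ?_⟩
         repeat first
           | exact ArcWalk.nil _
           | refine ArcWalk.cons (by decide) ?_)

/-- vertex embedding of T' into N: r'↦p'(1), c'↦p(3), x↦6, y↦7, z↦8 -/
def phiT' : Fin 5 → Fin 9 := ![1, 3, 6, 7, 8]
def phiAT' : Fin 4 → List (Fin 10) := ![[2], [3], [4, 8], [5, 9]]

lemma displays_N_T' : Displays N T' := by
  refine ⟨DV, DA, 0, phiT', [0], phiAT', ⟨by decide, by decide, ?_⟩, ?_, by decide,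
    by decide, by decide, by decide, by decide, ?_, ?_, ?_, ?_⟩
  · intro v hv
    exact ⟨pathD v, pathD_walk v hv, fun q hq =>
      walk_unique DA_inj DA_root hq.1 (pathD_walk v hv).1 hq.2 (pathD_walk v hv).2⟩
  · intro v hv
    rw [my_OutDegIn_eq]
    show _ ↔ v ∈ Set.range nleaf
    simp only [Set.mem_range]
    revert hv
    revert v
    decide
  · exact ArcWalk.cons (by decide) (ArcWalk.nil _)
  · intro a ha
    rw [my_OutDegIn_eq]
    simp only [Set.mem_range]
    revert ha
    revert a
    decide
  · intro e
    refine ⟨by revert e; decide, by revert e; decide, by revert e; decide, ?_, ?_⟩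
    · fin_cases e <;>
        repeat first
          | exact ArcWalk.nil _
          | refine ArcWalk.cons (by decide) ?_
    · simp only [Set.mem_range]
      revert e
      decide
  · intro a ha
    have ha' : a ∈ ([0, 2, 3, 4, 5, 8, 9] : List (Fin 10)) := ha
    fin_cases a
    · exact Or.inl ⟨by decide, by decide⟩
    · exact absurd ha' (by decide)
    · exact Or.inr ⟨by decide, 0, by decide, by decide⟩
    · exact Or.inr ⟨by decide, 1, by decide, by decide⟩
    · exact Or.inr ⟨by decide, 2, by decide, by decide⟩
    · exact Or.inr ⟨by decide, 3, by decide, by decide⟩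
    · exact absurd ha' (by decide)
    · exact absurd ha' (by decide)
    · exact Or.inr ⟨by decide, 2, by decide, by decide⟩
    · exact Or.inr ⟨by decide, 3, by decide, by decide⟩

end St16
namespace St16

/-- ancestor lists in S_a = {0,1,2,3,4,7,8,9} -/
def ancListA : Fin 9 → List (Fin 9) :=
  ![[0], [0,1], [0,2], [0,1,3], [0,1,3,4], [0,2,5], [0,1,3,4,6], [0,2,5,7], [0,1,8]]
/-- ancestor lists in S_b = {0,1,2,3,5,6,8,9} -/
def ancListB : Fin 9 → List (Fin 9) :=
  ![[0], [0,1], [0,2], [0,1,3], [0,2,4], [0,1,3,5], [0,2,4,6], [0,1,3,5,7], [0,1,8]]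

def ancA : Fin 9 → Fin 9 → Prop := fun v u => u ∈ ancListA v
def ancB : Fin 9 → Fin 9 → Prop := fun v u => u ∈ ancListB v

instance : ∀ v u, Decidable (ancA v u) := fun v u =>
  decidable_of_iff (u ∈ ancListA v) Iff.rfl
instance : ∀ v u, Decidable (ancB v u) := fun v u =>
  decidable_of_iff (u ∈ ancListB v) Iff.rfl

lemma not_basedOn_N_T' : ¬ BasedOn N T' := by
  rintro ⟨S, φV, ⟨htree, hleafiff⟩, hsub, hroot, hleaf⟩
  -- arcs forced into S because their target has a unique in-arc in N
  have force : ∀ v : Fin 9, v ≠ 0 → ∃ a ∈ S, ntgt a = v := fun v hv => in_arc_exists htree hv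
  have mem_of_tgt : ∀ v : Fin 9, ∀ b : Fin 10, v ≠ 0 → (∀ a : Fin 10, ntgt a = v → a = b) →
      b ∈ S := by
    intro v b hv huniq
    obtain ⟨a, haS, hta⟩ := force v hv
    exact (huniq a hta) ▸ haS
  have m0 : (0 : Fin 10) ∈ S := mem_of_tgt 1 0 (by decide) (by decide)
  have m1 : (1 : Fin 10) ∈ S := mem_of_tgt 2 1 (by decide) (by decide)
  have m2 : (2 : Fin 10) ∈ S := mem_of_tgt 8 2 (by decide) (by decide)
  have m3 : (3 : Fin 10) ∈ S := mem_of_tgt 3 3 (by decide) (by decide)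
  have m8 : (8 : Fin 10) ∈ S := mem_of_tgt 6 8 (by decide) (by decide)
  have m9 : (9 : Fin 10) ∈ S := mem_of_tgt 7 9 (by decide) (by decide)
  -- q (vertex 2) and p (vertex 3) are not leaves, so have out-arcs in S
  have outq : (6 : Fin 10) ∈ S ∨ (7 : Fin 10) ∈ S := by
    have h2nl : (2 : Fin 9) ∉ N.leaves := by
      show ¬ ∃ x, nleaf x = 2
      decide
    have hne : OutDegIn nsrc S 2 ≠ 0 := fun h => h2nl ((hleafiff 2).mp h)
    obtain ⟨a, haS, hsa⟩ := Set.nonempty_of_ncard_ne_zero hne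
    fin_cases a <;> first
      | exact absurd hsa (by decide)
      | exact Or.inl haS
      | exact Or.inr haS
  have outp : (4 : Fin 10) ∈ S ∨ (5 : Fin 10) ∈ S := by
    have h3nl : (3 : Fin 9) ∉ N.leaves := by
      show ¬ ∃ x, nleaf x = 3
      decide
    have hne : OutDegIn nsrc S 3 ≠ 0 := fun h => h3nl ((hleafiff 3).mp h)
    obtain ⟨a, haS, hsa⟩ := Set.nonempty_of_ncard_ne_zero hne
    fin_cases a <;> first
      | exact absurd hsa (by decide)
      | exact Or.inl haS
      | exact Or.inr haS
  have n46 : ¬ ((4 : Fin 10) ∈ S ∧ (6 : Fin 10) ∈ S) := by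
    rintro ⟨h4, h6⟩
    exact absurd (in_arc_unique htree h4 h6 (by decide)) (by decide)
  have n57 : ¬ ((5 : Fin 10) ∈ S ∧ (7 : Fin 10) ∈ S) := by
    rintro ⟨h5, h7⟩
    exact absurd (in_arc_unique htree h5 h7 (by decide)) (by decide)
  -- leaf images
  have h6 : φV 2 = 6 := hleaf 0
  have h7 : φV 3 = 7 := hleaf 1
  have hr : φV 0 = 0 := hroot
  obtain ⟨hinj, -, -, -, φA, hφA, -⟩ := hsub
  -- walks of the two cherry arcs of T'
  have w2 : ArcWalk nsrc ntgt (φV 1) (φA 2) (6 : Fin 9) := h6 ▸ (hφA 2).2.2.2.1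
  have w3 : ArcWalk nsrc ntgt (φV 1) (φA 3) (7 : Fin 9) := h7 ▸ (hφA 3).2.2.2.1
  have mw2 : ∀ a ∈ φA 2, a ∈ S := (hφA 2).2.2.1
  have mw3 : ∀ a ∈ φA 3, a ∈ S := (hφA 3).2.2.1
  have contra : φV 1 = 0 → False := by
    intro h
    have : (0 : Fin 5) = 1 := hinj (hr.trans h.symm)
    exact absurd this (by decide)
  rcases outp with h4 | h5
  · -- case S = S_a
    have n6 : (6 : Fin 10) ∉ S := fun h6' => n46 ⟨h4, h6'⟩
    have h7' : (7 : Fin 10) ∈ S := outq.resolve_left n6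
    have n5 : (5 : Fin 10) ∉ S := fun h5' => n57 ⟨h5', h7'⟩
    have closed : ∀ a ∈ S, ∀ v, ancA v (ntgt a) → ancA v (nsrc a) := by
      intro a haS
      fin_cases a <;> first
        | exact absurd haS n5
        | exact absurd haS n6
        | decide
    have a1 : ancA 6 (φV 1) := arcwalk_ancestors ancA closed mw2 w2 (by decide)
    have a2 : ancA 7 (φV 1) := arcwalk_ancestors ancA closed mw3 w3 (by decide)
    have key : ∀ u : Fin 9, ancA 6 u → ancA 7 u → u = 0 := by decide
    exact contra (key _ a1 a2)
  · -- case S = S_b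
    have n7 : (7 : Fin 10) ∉ S := fun h7' => n57 ⟨h5, h7'⟩
    have h6' : (6 : Fin 10) ∈ S := outq.resolve_right n7
    have n4 : (4 : Fin 10) ∉ S := fun h4' => n46 ⟨h4', h6'⟩
    have closed : ∀ a ∈ S, ∀ v, ancB v (ntgt a) → ancB v (nsrc a) := by
      intro a haS
      fin_cases a <;> first
        | exact absurd haS n4
        | exact absurd haS n7
        | decide
    have a1 : ancB 6 (φV 1) := arcwalk_ancestors ancB closed mw2 w2 (by decide)
    have a2 : ancB 7 (φV 1) := arcwalk_ancestors ancB closed mw3 w3 (by decide)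
    have key : ∀ u : Fin 9, ancB 6 u → ancB 7 u → u = 0 := by decide
    exact contra (key _ a1 a2)

end St16
namespace St16

lemma phyloTree_T : IsPhyloTree T := by
  intro v
  rw [my_InDeg_eq]
  revert v
  decide

lemma phyloTree_T' : IsPhyloTree T' := by
  intro v
  rw [my_InDeg_eq]
  revert v
  decide

end St16
/-- Being based on a tree is strictly stronger than displaying it:
there is a binary phylogenetic network `N` over a 3-element leaf set `X` and rooted
binary phylogenetic `X`-trees `T`, `T'` such that `N` is based on `T` and displays
`T'`, but `N` is not based on `T'`. -/
theorem statement_16 :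
    ∃ (X V A V1 A1 V2 A2 : Type) (N : PhyloNetwork X V A)
      (T : PhyloNetwork X V1 A1) (T' : PhyloNetwork X V2 A2),
      Nat.card X = 3 ∧ IsPhyloTree T ∧ IsPhyloTree T' ∧
      BasedOn N T ∧ Displays N T' ∧ ¬ BasedOn N T' :=
  ⟨Fin 3, Fin 9, Fin 10, Fin 5, Fin 4, Fin 5, Fin 4, St16.N, St16.T, St16.T',
    by simp [Nat.card_eq_fintype_card], St16.phyloTree_T, St16.phyloTree_T',
    St16.basedOn_N_T, St16.displays_N_T', St16.not_basedOn_N_T'⟩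
end
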